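/- Consider the coupled linear recursion on ℝⁿ × ℝⁿ: ẽ_{t+1}^i = (I − α AᵢᵀAᵢ) ẽₜ^i − α Aᵢᵀ Cᵢ ẽₜ^j and ẽ_{t+1}^j = (I − α AⱼᵀAⱼ) ẽₜ^j − α Aⱼᵀ Cⱼ ẽₜ^i, with constant matrices. There exist matrices Aᵢ, Aⱼ, Cᵢ, Cⱼ (with Aᵢ, Aⱼ having positive-definite Gram matrices) such that for every α > 0 the coupled recursion has an eigenvalue of modulus at least 1, i.e., the joint error dynamics is not asymptotically stable for any step size. -/

import Mathlib

open Matrix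

/-! Take `Aᵢ = Aⱼ = 1` and `Cᵢ = Cⱼ = -c • 1`. The joint update matrix is then
`fromBlocks D B B D` with `D = (1 - α) • 1` and `B = (α c) • 1`, so it maps `(v, v)` to
`((D + B) v, (D + B) v) = (1 + α (c - 1)) • (v, v)`. For `c > 1` this eigenvalue exceeds `1`
for every `α > 0`. -/

theorem Matrix.fromBlocks_mulVec_sum_elim_self {m n R : Type*} [Fintype n]
    [NonUnitalNonAssocSemiring R] (A B : Matrix m n R) (v : n → R) :
    fromBlocks A B B A *ᵥ Sum.elim v v = Sum.elim ((A + B) *ᵥ v) ((A + B) *ᵥ v) := by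
  simp only [fromBlocks_mulVec, Sum.elim_comp_inl, Sum.elim_comp_inr, add_mulVec,
    add_comm (B *ᵥ v)]

section

variable {n : Type*} [Fintype n] [DecidableEq n]

def jointUpdate (α : ℝ) (Ai Aj Ci Cj : Matrix n n ℝ) : Matrix (n ⊕ n) (n ⊕ n) ℝ :=
  fromBlocks (1 - α • (Aiᵀ * Ai)) (-(α • (Aiᵀ * Ci))) (-(α • (Ajᵀ * Cj))) (1 - α • (Ajᵀ * Aj))

theorem jointUpdate_one_one_mulVec_sum_elim_self (α c : ℝ) (v : n → ℝ) :
    jointUpdate α 1 1 (-c • 1) (-c • 1) *ᵥ Sum.elim v v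
      = (1 + α * (c - 1)) • Sum.elim v v := by
  have hsum : (1 - α • ((1 : Matrix n n ℝ)ᵀ * 1)) + -(α • ((1 : Matrix n n ℝ)ᵀ * (-c • 1)))
      = (1 + α * (c - 1)) • (1 : Matrix n n ℝ) := by
    simp only [transpose_one, one_mul]
    module
  rw [jointUpdate, fromBlocks_mulVec_sum_elim_self, hsum, smul_mulVec, one_mulVec]
  ext (i | i) <;> rfl

end

/-- Instability of the expert-peer-assumption error dynamics: there exist
matrices `Aᵢ, Aⱼ, Cᵢ, Cⱼ` (with positive-definite Gram matrices `AᵢᵀAᵢ`,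
`AⱼᵀAⱼ`) such that for every step size `α > 0`, the joint update matrix of the
coupled recursion
`ẽ_{t+1}^i = (I - αAᵢᵀAᵢ)ẽₜ^i - αAᵢᵀCᵢ ẽₜ^j`,
`ẽ_{t+1}^j = (I - αAⱼᵀAⱼ)ẽₜ^j - αAⱼᵀCⱼ ẽₜ^i`
has an eigenvalue of modulus at least `1`, so the dynamics is not
asymptotically stable for any step size. -/
theorem expert_assumption_can_be_unstable :
    ∃ (n : ℕ) (Ai Aj Ci Cj : Matrix (Fin n) (Fin n) ℝ),
      (Aiᵀ * Ai).PosDef ∧ (Ajᵀ * Aj).PosDef ∧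
      ∀ α : ℝ, 0 < α →
        ∃ (v : (Fin n ⊕ Fin n) → ℝ) (lam : ℝ),
          v ≠ 0 ∧
          (fromBlocks ((1 : Matrix (Fin n) (Fin n) ℝ) - α • (Aiᵀ * Ai))
              (-(α • (Aiᵀ * Ci)))
              (-(α • (Ajᵀ * Cj)))
              ((1 : Matrix (Fin n) (Fin n) ℝ) - α • (Ajᵀ * Aj))).mulVec v
            = lam • v ∧
          1 ≤ |lam| := by
  have hgram : ((1 : Matrix (Fin 1) (Fin 1) ℝ)ᵀ * 1).PosDef := by
    simpa using PosDef.one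
  refine ⟨1, 1, 1, -(2 : ℝ) • 1, -(2 : ℝ) • 1, hgram, hgram, fun α hα => ?_⟩
  refine ⟨Sum.elim 1 1, 1 + α * (2 - 1), ?_, jointUpdate_one_one_mulVec_sum_elim_self α 2 1, ?_⟩
  · exact Function.ne_iff.2 ⟨Sum.inl 0, by simp⟩
  · rw [abs_of_pos (by linarith)]
    linarith
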